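/- Margin-based gradient lower bound (Polyak-type condition) for the exponential loss: for every w ∈ ℝ^d, the dual norm of the gradient satisfies ‖∇L(w)‖_* ≥ γ · L(w), where γ = max_{‖w'‖≤1} min_n ⟨x_n, w'⟩ is the ‖·‖-maximum margin. -/

import Mathlib

open scoped RealInnerProductSpace BigOperators
open Filter


/-- The dual norm `‖v‖_* = sup {⟨v, u⟩ : ‖u‖ ≤ 1}` of a (general) norm `nrm` on `ℝ^d`. -/
noncomputable def dualNorm {d : ℕ} (nrm : EuclideanSpace ℝ (Fin d) → ℝ)
    (v : EuclideanSpace ℝ (Fin d)) : ℝ :=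
  sSup ((fun u => ⟪v, u⟫) '' {u | nrm u ≤ 1})
/-- The exponential loss `L(w) = ∑ₙ exp(-⟨w, xₙ⟩)`. -/
noncomputable def expLoss {d N : ℕ} (x : Fin N → EuclideanSpace ℝ (Fin d))
    (w : EuclideanSpace ℝ (Fin d)) : ℝ :=
  ∑ n, Real.exp (-⟪w, x n⟫)

/-- The gradient of the exponential loss, `∇L(w) = -∑ₙ exp(-⟨w, xₙ⟩) xₙ`. -/
noncomputable def expLossGrad {d N : ℕ} (x : Fin N → EuclideanSpace ℝ (Fin d))
    (w : EuclideanSpace ℝ (Fin d)) : EuclideanSpace ℝ (Fin d) :=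
  -∑ n, Real.exp (-⟪w, x n⟫) • x n

/-!
Let `u` attain the margin, so `γ ≤ ⟪xₙ, u⟫` for every `n`. Pairing the gradient with `-u` gives
`⟪∇L(w), -u⟫ = ∑ₙ exp(-⟪w, xₙ⟫) ⟪xₙ, u⟫ ≥ γ L(w)`, and `-u` lies in the `nrm`-unit ball, so this
pairing is at most `‖∇L(w)‖_*`. The supremum defining the dual norm is finite because, in finite
dimension, `nrm` dominates a multiple of the Euclidean norm.
-/

/-- `E` with the norm `nrm` in place of its own. -/
def NormedBy (E : Type*) (_nrm : E → ℝ) : Type _ := E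

namespace NormedBy

variable {E : Type*} [AddCommGroup E] [Module ℝ E] {nrm : E → ℝ}

instance : AddCommGroup (NormedBy E nrm) := inferInstanceAs (AddCommGroup E)
instance : Module ℝ (NormedBy E nrm) := inferInstanceAs (Module ℝ E)
instance : Norm (NormedBy E nrm) := ⟨nrm⟩

theorem normedSpaceCore (hnonneg : ∀ v, 0 ≤ nrm v) (heq_zero : ∀ v, nrm v = 0 ↔ v = 0)
    (hsmul : ∀ (c : ℝ) v, nrm (c • v) = |c| * nrm v)
    (hadd : ∀ u v, nrm (u + v) ≤ nrm u + nrm v) :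
    NormedSpace.Core ℝ (NormedBy E nrm) where
  norm_nonneg := hnonneg
  norm_smul := hsmul
  norm_triangle := hadd
  norm_eq_zero_iff := heq_zero

end NormedBy

theorem exists_norm_le_mul_of_isNorm {E : Type*} [NormedAddCommGroup E] [NormedSpace ℝ E]
    [FiniteDimensional ℝ E] {nrm : E → ℝ} (hnonneg : ∀ v, 0 ≤ nrm v)
    (heq_zero : ∀ v, nrm v = 0 ↔ v = 0) (hsmul : ∀ (c : ℝ) v, nrm (c • v) = |c| * nrm v)
    (hadd : ∀ u v, nrm (u + v) ≤ nrm u + nrm v) :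
    ∃ C, 0 ≤ C ∧ ∀ u, ‖u‖ ≤ C * nrm u := by
  let core := NormedBy.normedSpaceCore hnonneg heq_zero hsmul hadd
  let _ := NormedAddCommGroup.ofCore core
  let _ := NormedSpace.ofCore core
  have : FiniteDimensional ℝ (NormedBy E nrm) := inferInstanceAs (FiniteDimensional ℝ E)
  -- the identity `(E, nrm) → (E, ‖·‖)` is automatically continuous in finite dimension
  let ι : NormedBy E nrm →L[ℝ] E := LinearMap.toContinuousLinearMap LinearMap.id
  exact ⟨‖ι‖, norm_nonneg ι, ι.le_opNorm⟩

theorem bddAbove_inner_image_of_norm_le_mul {E : Type*} [NormedAddCommGroup E]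
    [InnerProductSpace ℝ E] {nrm : E → ℝ} {C : ℝ} (hC0 : 0 ≤ C) (hC : ∀ u, ‖u‖ ≤ C * nrm u)
    (v : E) :
    BddAbove ((fun u => ⟪v, u⟫) '' {u | nrm u ≤ 1}) := by
  refine ⟨‖v‖ * C, ?_⟩
  rintro _ ⟨u, hu, rfl⟩
  calc ⟪v, u⟫ ≤ ‖v‖ * ‖u‖ := real_inner_le_norm v u
    _ ≤ ‖v‖ * C := by
      gcongr
      exact (hC u).trans (mul_le_of_le_one_right hC0 hu)

theorem inner_le_dualNorm {d : ℕ} {nrm : EuclideanSpace ℝ (Fin d) → ℝ} {C : ℝ} (hC0 : 0 ≤ C)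
    (hC : ∀ u, ‖u‖ ≤ C * nrm u) (v : EuclideanSpace ℝ (Fin d)) {u : EuclideanSpace ℝ (Fin d)}
    (hu : nrm u ≤ 1) : ⟪v, u⟫ ≤ dualNorm nrm v :=
  le_csSup (bddAbove_inner_image_of_norm_le_mul hC0 hC v) ⟨u, hu, rfl⟩

theorem inner_expLossGrad_neg {d N : ℕ} (x : Fin N → EuclideanSpace ℝ (Fin d))
    (w u : EuclideanSpace ℝ (Fin d)) :
    ⟪expLossGrad x w, -u⟫ = ∑ n, Real.exp (-⟪w, x n⟫) * ⟪x n, u⟫ := by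
  simp only [expLossGrad, inner_neg_neg, sum_inner, real_inner_smul_left]

theorem mul_expLoss_le_inner_expLossGrad_neg {d N : ℕ} (x : Fin N → EuclideanSpace ℝ (Fin d))
    (w : EuclideanSpace ℝ (Fin d)) {u : EuclideanSpace ℝ (Fin d)} {γ : ℝ}
    (hγ : ∀ n, γ ≤ ⟪x n, u⟫) :
    γ * expLoss x w ≤ ⟪expLossGrad x w, -u⟫ := by
  rw [inner_expLossGrad_neg, expLoss, Finset.mul_sum]
  refine Finset.sum_le_sum fun n _ => ?_
  rw [mul_comm]
  exact mul_le_mul_of_nonneg_left (hγ n) (Real.exp_pos _).le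

/-- Polyak-type margin condition for the exponential loss: `‖∇L(w)‖_* ≥ γ L(w)` for every
`w`, where `γ = max_{‖w'‖≤1} minₙ ⟨xₙ, w'⟩` is the `‖·‖`-max margin. -/
theorem expLoss_grad_dualNorm_ge_margin_mul_loss
    {d N : ℕ} (nrm : EuclideanSpace ℝ (Fin d) → ℝ)
    (hnrm_nonneg : ∀ v, 0 ≤ nrm v)
    (hnrm_eq_zero : ∀ v, nrm v = 0 ↔ v = 0)
    (hnrm_smul : ∀ (c : ℝ) v, nrm (c • v) = |c| * nrm v)
    (hnrm_add : ∀ u v, nrm (u + v) ≤ nrm u + nrm v)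
    (x : Fin N → EuclideanSpace ℝ (Fin d))
    (hNe : (Finset.univ : Finset (Fin N)).Nonempty)
    (γ : ℝ)
    (hγ : IsGreatest {m : ℝ | ∃ u : EuclideanSpace ℝ (Fin d), nrm u ≤ 1 ∧
        m = Finset.univ.inf' hNe (fun n => ⟪x n, u⟫)} γ)
    (w : EuclideanSpace ℝ (Fin d)) :
    γ * expLoss x w ≤ dualNorm nrm (expLossGrad x w) := by
  obtain ⟨u, hu, rfl⟩ := hγ.1
  obtain ⟨C, hC0, hC⟩ := exists_norm_le_mul_of_isNorm hnrm_nonneg hnrm_eq_zero hnrm_smul hnrm_add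
  have hneg_u : nrm (-u) ≤ 1 := by
    rw [← neg_one_smul ℝ u, hnrm_smul]
    simpa using hu
  calc _ ≤ ⟪expLossGrad x w, -u⟫ :=
        mul_expLoss_le_inner_expLossGrad_neg x w fun n => Finset.inf'_le _ (Finset.mem_univ n)
    _ ≤ dualNorm nrm (expLossGrad x w) := inner_le_dualNorm hC0 hC _ hneg_u
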